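/- The sum over n ≥ 1 of H_{n,4}/n^2 equals (25/3)ζ(6) − 3ζ(2)ζ(4) − ζ(3)^2, where H_{n,4} = ∑_{j=1}^n 1/j^4. -/

import Mathlib

/-!
Euler's partial-fraction method. Let `T(a, b) = ∑_{1 ≤ i < j} 1 / (i^a j^b)`. Splitting the
square of indices along the diagonal gives `ζ(a) ζ(b) = ζ(a+b) + T(a,b) + T(b,a)`, and
splitting off the diagonal term gives `∑_n H_{n,b} / n^a = ζ(a+b) + T(b,a)`.

Write `j = i + d` and decompose `1 / (i^a j^b)` into partial fractions in `i`. Summing over `i`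
and then over `d`, a term `1 / (d^c j^r)` contributes `T(c, r)`, a term `1 / (d^c i^2)`
contributes `ζ(c) ζ(2)`, and `(1/i - 1/j) / d^c` telescopes in `i` to `H_{d,1} / d^c`. For
`1 / (i j^5)` this is the sum formula `T(1,5) + T(2,4) + T(3,3) + T(4,2) = ζ(6)`, for
`1 / (i^2 j^4)` the relation `4 (ζ(6) + T(1,5)) = ζ(2) ζ(4) + 3 T(4,2) + 2 T(3,3)`. Together with
the reflection formulas for `(2,4)` and `(3,3)` they determine `T(4,2)`; finally
`ζ(2) ζ(4) = 7 ζ(6) / 4` from the values in terms of `π`.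
-/

/-- Generalized harmonic number `H_{n,4} = ∑_{j=1}^n 1/j^4`. -/
noncomputable def H4 (n : ℕ) : ℝ := ∑ j ∈ Finset.range n, 1 / ((j + 1 : ℝ)) ^ 4

/-- `ζ(r) = ∑_{n ≥ 1} 1/n^r`. -/
noncomputable def zetaR (r : ℕ) : ℝ := ∑' n : ℕ, 1 / ((n + 1 : ℝ)) ^ r

open Finset Filter Topology

noncomputable def harmonicPow (r n : ℕ) : ℝ := ∑ j ∈ range n, 1 / ((j : ℝ) + 1) ^ r

/-- `doubleZeta a b = ∑_{1 ≤ i < j} 1 / (i ^ a * j ^ b)`, with `i = p.1 + 1`, `j = i + p.2 + 1`.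
-/
noncomputable def doubleZeta (a b : ℕ) : ℝ :=
  ∑' p : ℕ × ℕ, 1 / (((p.1 : ℝ) + 1) ^ a * ((p.1 : ℝ) + p.2 + 2) ^ b)

lemma summable_one_div_add_one_pow {r : ℕ} (hr : 1 < r) :
    Summable fun n : ℕ => 1 / ((n : ℝ) + 1) ^ r := by
  simpa using (summable_nat_add_iff 1).mpr (Real.summable_one_div_nat_pow.mpr hr)

lemma hasSum_zetaR {r : ℕ} (hr : 1 < r) :
    HasSum (fun n : ℕ => 1 / ((n : ℝ) + 1) ^ r) (zetaR r) :=
  (summable_one_div_add_one_pow hr).hasSum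

lemma zetaR_eq_of_hasSum {r : ℕ} (hr : r ≠ 0) {s : ℝ}
    (h : HasSum (fun n : ℕ => 1 / (n : ℝ) ^ r) s) : zetaR r = s := by
  refine HasSum.tsum_eq ?_
  simpa [hr] using (hasSum_nat_add_iff' 1).mpr h

lemma hasSum_one_div_add_pow_tail {r : ℕ} (hr : 1 < r) (k : ℕ) :
    HasSum (fun m : ℕ => 1 / ((k : ℝ) + m + 2) ^ r) (zetaR r - harmonicPow r (k + 1)) :=
  ((hasSum_nat_add_iff' (k + 1)).mpr (hasSum_zetaR hr)).congr_fun fun m => by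
    push_cast
    ring

lemma Antitone.hasSum_sub_add {f : ℕ → ℝ} (hf : Antitone f) (h0 : Tendsto f atTop (𝓝 0))
    (K : ℕ) : HasSum (fun n => f n - f (n + K)) (∑ i ∈ range K, f i) := by
  have hpartial : ∀ N, ∑ n ∈ range N, (f n - f (n + K))
      = ∑ i ∈ range K, f i - ∑ i ∈ range K, f (N + i) := by
    intro N
    have h1 := sum_range_add f N K
    have h2 := sum_range_add f K N
    rw [add_comm K N] at h2
    simp only [sum_sub_distrib, add_comm _ K]
    linarith
  rw [hasSum_iff_tendsto_nat_of_nonneg fun n => sub_nonneg.mpr (hf (Nat.le_add_right n K))]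
  simp_rw [hpartial]
  simpa using tendsto_const_nhds.sub
    (tendsto_finsetSum (range K) fun i _ => h0.comp (tendsto_add_atTop_nat i))

lemma hasSum_one_div_sub_one_div_add (k : ℕ) :
    HasSum (fun m : ℕ => 1 / ((m : ℝ) + 1) - 1 / ((k : ℝ) + m + 2))
      (harmonicPow 1 (k + 1)) := by
  have hf : Antitone fun n : ℕ => 1 / ((n : ℝ) + 1) := fun a b h => by dsimp only; gcongr
  convert hf.hasSum_sub_add tendsto_one_div_add_atTop_nhds_zero_nat (k + 1) using 1
  · ext m
    push_cast
    ring_nf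
  · simp [harmonicPow]

lemma summable_doubleZeta {a b : ℕ} (hb : 2 ≤ b) (hab : 4 ≤ a + b) :
    Summable fun p : ℕ × ℕ => 1 / (((p.1 : ℝ) + 1) ^ a * ((p.1 : ℝ) + p.2 + 2) ^ b) := by
  obtain ⟨c, rfl⟩ := Nat.exists_eq_add_of_le hb
  have h2 := summable_one_div_add_one_pow one_lt_two
  refine (h2.mul_of_nonneg h2 (fun _ => by positivity) fun _ => by positivity).of_nonneg_of_le
    (fun _ => by positivity) fun ⟨m, g⟩ => ?_
  rw [one_div_mul_one_div]
  refine one_div_le_one_div_of_le (by positivity) ?_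
  have hm : (1 : ℝ) ≤ m + 1 := by simp
  calc ((m : ℝ) + 1) ^ 2 * ((g : ℝ) + 1) ^ 2
      ≤ ((m : ℝ) + 1) ^ (a + c) * ((g : ℝ) + 1) ^ 2 :=
        mul_le_mul_of_nonneg_right (pow_le_pow_right₀ hm (by omega)) (by positivity)
    _ = ((m : ℝ) + 1) ^ a * (((m : ℝ) + 1) ^ c * ((g : ℝ) + 1) ^ 2) := by ring
    _ ≤ ((m : ℝ) + 1) ^ a * (((m : ℝ) + g + 2) ^ c * ((m : ℝ) + g + 2) ^ 2) := by
        gcongr <;> linarith [(g.cast_nonneg : (0 : ℝ) ≤ g), (m.cast_nonneg : (0 : ℝ) ≤ m)]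
    _ = ((m : ℝ) + 1) ^ a * ((m : ℝ) + g + 2) ^ (2 + c) := by ring

lemma hasSum_doubleZeta_rows {a b : ℕ} (hb : 2 ≤ b) (hab : 4 ≤ a + b) :
    HasSum (fun k : ℕ => 1 / ((k : ℝ) + 1) ^ a * (zetaR b - harmonicPow b (k + 1)))
      (doubleZeta a b) :=
  (summable_doubleZeta hb hab).hasSum.prod_fiberwise fun k => by
    simpa only [one_div_mul_one_div] using
      (hasSum_one_div_add_pow_tail hb k).mul_left (1 / ((k : ℝ) + 1) ^ a)

lemma hasSum_doubleZeta_of_columns {a b : ℕ} (hb : 2 ≤ b) (hab : 4 ≤ a + b) {V : ℕ → ℝ}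
    (hV : ∀ k : ℕ,
      HasSum (fun m : ℕ => 1 / (((m : ℝ) + 1) ^ a * ((m : ℝ) + k + 2) ^ b)) (V k)) :
    HasSum V (doubleZeta a b) :=
  ((Equiv.prodComm ℕ ℕ).hasSum_iff.mpr (summable_doubleZeta hb hab).hasSum).prod_fiberwise hV

lemma HasSum.sum_antidiagonal {A α : Type*} [AddCommMonoid A] [HasAntidiagonal A]
    [AddCommMonoid α] [TopologicalSpace α] [ContinuousAdd α] [RegularSpace α]
    {f : A × A → α} {s : α} (h : HasSum f s) :
    HasSum (fun n => ∑ p ∈ antidiagonal n, f p) s :=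
  (HasAntidiagonal.sigmaAntidiagonalEquivProd.hasSum_iff.mpr h).sigma fun n =>
    (antidiagonal n).hasSum f

lemma hasSum_harmonicPow_div {a b : ℕ} (ha : 2 ≤ a) (hab : 4 ≤ a + b) :
    HasSum (fun n : ℕ => harmonicPow b (n + 1) / ((n : ℝ) + 1) ^ a)
      (zetaR (a + b) + doubleZeta b a) := by
  have hdiag : HasSum (fun n : ℕ => harmonicPow b n / ((n : ℝ) + 1) ^ a) (doubleZeta b a) := by
    have h := (hasSum_nat_add_iff (f := fun n : ℕ => harmonicPow b n / ((n : ℝ) + 1) ^ a) 1).mp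
      ((summable_doubleZeta (a := b) ha (by omega)).hasSum.sum_antidiagonal.congr_fun fun N => by
        rw [Nat.sum_antidiagonal_eq_sum_range_succ_mk, harmonicPow, sum_div]
        refine sum_congr rfl fun i hi => ?_
        rw [Nat.cast_sub (Nat.lt_succ_iff.mp (mem_range.mp hi))]
        push_cast
        ring_nf)
    have h0 : harmonicPow b 0 = 0 := sum_range_zero _
    rwa [sum_range_one, h0, zero_div, add_zero] at h
  refine ((hasSum_zetaR (r := a + b) (by omega)).add hdiag).congr_fun fun n => ?_
  rw [harmonicPow, sum_range_succ, ← harmonicPow]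
  ring

lemma zetaR_mul_zetaR {a b : ℕ} (ha : 2 ≤ a) (hb : 2 ≤ b) :
    zetaR a * zetaR b = zetaR (a + b) + doubleZeta b a + doubleZeta a b :=
  ((hasSum_zetaR ha).mul_right (zetaR b)).unique
    (((hasSum_harmonicPow_div (b := b) ha (by omega)).add
      (hasSum_doubleZeta_rows (a := a) hb (by omega))).congr_fun fun n => by ring)

lemma one_div_mul_pow_five_eq {K : Type*} [Field K] {x d : K} (hx : x ≠ 0) (hd : d ≠ 0)
    (hxd : x + d ≠ 0) :
    1 / (x ^ 1 * (x + d) ^ 5) = (1 / x - 1 / (x + d)) / d ^ 5 - 1 / d ^ 4 * (1 / (x + d) ^ 2)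
      - 1 / d ^ 3 * (1 / (x + d) ^ 3) - 1 / d ^ 2 * (1 / (x + d) ^ 4)
      - 1 / d ^ 1 * (1 / (x + d) ^ 5) := by
  field_simp
  ring

lemma one_div_sq_mul_pow_four_eq {K : Type*} [Field K] {x d : K} (hx : x ≠ 0) (hd : d ≠ 0)
    (hxd : x + d ≠ 0) :
    1 / (x ^ 2 * (x + d) ^ 4) = -4 * ((1 / x - 1 / (x + d)) / d ^ 5) + 1 / d ^ 4 * (1 / x ^ 2)
      + 3 * (1 / d ^ 4 * (1 / (x + d) ^ 2)) + 2 * (1 / d ^ 3 * (1 / (x + d) ^ 3))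
      + 1 / d ^ 2 * (1 / (x + d) ^ 4) := by
  field_simp
  ring

theorem doubleZeta_sum_formula_six :
    doubleZeta 1 5 + doubleZeta 2 4 + doubleZeta 3 3 + doubleZeta 4 2 = zetaR 6 := by
  have hcols := hasSum_doubleZeta_of_columns (a := 1) (b := 5) (by norm_num) (by norm_num)
    fun k => by
      have tail (c r : ℕ) (hr : 1 < r) :=
        (hasSum_one_div_add_pow_tail hr k).mul_left (1 / ((k : ℝ) + 1) ^ c)
      refine (((((hasSum_one_div_sub_one_div_add k).div_const (((k : ℝ) + 1) ^ 5)).sub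
        (tail 4 2 (by norm_num))).sub (tail 3 3 (by norm_num))).sub (tail 2 4 (by norm_num))).sub
        (tail 1 5 (by norm_num)) |>.congr_fun fun m => ?_
      rw [add_comm (k : ℝ) m, show (m : ℝ) + k + 2 = (m + 1) + (k + 1) by ring,
        one_div_mul_pow_five_eq (by positivity) (by positivity) (by positivity)]
  have row (c r : ℕ) (hr : 2 ≤ r) (hcr : 4 ≤ c + r) := hasSum_doubleZeta_rows (a := c) hr hcr
  have hrows := ((((hasSum_harmonicPow_div (a := 5) (b := 1) (by norm_num) (by norm_num)).sub
    (row 4 2 le_rfl (by norm_num))).sub (row 3 3 (by norm_num) (by norm_num))).sub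
    (row 2 4 (by norm_num) (by norm_num))).sub (row 1 5 (by norm_num) (by norm_num))
  linarith [hcols.unique hrows]

theorem doubleZeta_two_four_relation :
    4 * (zetaR 6 + doubleZeta 1 5)
      = zetaR 4 * zetaR 2 + 3 * doubleZeta 4 2 + 2 * doubleZeta 3 3 := by
  have hcols := hasSum_doubleZeta_of_columns (a := 2) (b := 4) (by norm_num) (by norm_num)
    fun k => by
      have tail (c r : ℕ) (hr : 1 < r) :=
        (hasSum_one_div_add_pow_tail hr k).mul_left (1 / ((k : ℝ) + 1) ^ c)
      refine ((((((hasSum_one_div_sub_one_div_add k).div_const (((k : ℝ) + 1) ^ 5)).mul_left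
        (-4)).add
        ((hasSum_zetaR one_lt_two).mul_left (1 / ((k : ℝ) + 1) ^ 4))).add
        ((tail 4 2 (by norm_num)).mul_left 3)).add ((tail 3 3 (by norm_num)).mul_left 2)).add
        (tail 2 4 (by norm_num)) |>.congr_fun fun m => ?_
      rw [add_comm (k : ℝ) m, show (m : ℝ) + k + 2 = (m + 1) + (k + 1) by ring,
        one_div_sq_mul_pow_four_eq (by positivity) (by positivity) (by positivity)]
  have row (c r : ℕ) (hr : 2 ≤ r) (hcr : 4 ≤ c + r) := hasSum_doubleZeta_rows (a := c) hr hcr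
  have hrows := (((((hasSum_harmonicPow_div (a := 5) (b := 1) (by norm_num) (by norm_num)).mul_left
    (-4)).add ((hasSum_zetaR (r := 4) (by norm_num)).mul_right (zetaR 2))).add
    ((row 4 2 le_rfl (by norm_num)).mul_left 3)).add
    ((row 3 3 (by norm_num) (by norm_num)).mul_left 2)).add (row 2 4 (by norm_num) (by norm_num))
  linarith [hcols.unique hrows]

lemma bernoulli'_six : bernoulli' 6 = 1 / 42 := by
  have h5 : bernoulli' 5 = 0 := bernoulli'_eq_zero_of_odd (by decide) (by norm_num)
  have c2 : Nat.choose 6 2 = 15 := by decide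
  have c4 : Nat.choose 6 4 = 15 := by decide
  rw [bernoulli'_def]
  norm_num [sum_range_succ, h5, c2, c4]

lemma hasSum_zeta_six : HasSum (fun n : ℕ => (1 : ℝ) / (n : ℝ) ^ 6) (Real.pi ^ 6 / 945) := by
  convert hasSum_zeta_nat (k := 3) (by norm_num) using 1
  rw [bernoulli_eq_bernoulli'_of_ne_one (by norm_num), bernoulli'_six]
  norm_num [Nat.factorial]
  ring

lemma zetaR_two_mul_zetaR_four : zetaR 2 * zetaR 4 = 7 / 4 * zetaR 6 := by
  rw [zetaR_eq_of_hasSum two_ne_zero hasSum_zeta_two,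
    zetaR_eq_of_hasSum four_ne_zero hasSum_zeta_four,
    zetaR_eq_of_hasSum (by norm_num) hasSum_zeta_six]
  ring

/-- `∑_{n≥1} H_{n,4}/n^2 = (25/3)ζ(6) − 3ζ(2)ζ(4) − ζ(3)^2`. -/
theorem stmt6 :
    ∑' n : ℕ, H4 (n + 1) / ((n + 1 : ℝ)) ^ 2 =
      25 / 3 * zetaR 6 - 3 * zetaR 2 * zetaR 4 - zetaR 3 ^ 2 := by
  have hH4 : ∑' n : ℕ, H4 (n + 1) / ((n + 1 : ℝ)) ^ 2 = zetaR 6 + doubleZeta 4 2 :=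
    (hasSum_harmonicPow_div (a := 2) (b := 4) le_rfl (by norm_num)).tsum_eq
  linear_combination hH4 + (4 / 3) * doubleZeta_sum_formula_six
    - (1 / 3) * doubleZeta_two_four_relation
    + (4 / 3) * zetaR_mul_zetaR (a := 2) (b := 4) le_rfl (by norm_num)
    + zetaR_mul_zetaR (a := 3) (b := 3) (by norm_num) (by norm_num)
    + (4 / 3) * zetaR_two_mul_zetaR_four
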